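/- arXiv:2202.00301 — 3 statements merged into one kernel-verified Lean document; each statement's English description precedes it below -/
import Mathlib

section
/- Let W be a 6-dimensional complex vector space and U ⊂ W a 3-dimensional subspace. Then the subspace T_U = ∧²U ∧ W ⊂ ∧³W is 10-dimensional and is Lagrangian with respect to the symplectic form ω(α,β) = vol(α ∧ β). -/
/-!
Extend a basis `e₀, e₁, e₂` of `U` to a basis `e₀, …, e₅` of `W`. Expanding `u₁ ∧ u₂ ∧ w` in
this basis shows that `T_U` is spanned by the basis vectors `e_s` of `⋀³W` whose index set `s`
meets `{0, 1, 2}` in at least two points; there are `1 + 3 · 3 = 10` of them. Two such index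
sets always meet inside the three-element set `{0, 1, 2}`, so every product `e_s ∧ e_t` vanishes
and `T_U ∧ T_U = 0`.
-/

open ExteriorAlgebra Module Finset Submodule

namespace ExteriorAlgebra

variable {R M : Type*} [CommRing R] [AddCommGroup M] [Module R M]

theorem ι_mul_ι_mul_ι_eq_ιMulti (x y z : M) :
    ι R x * ι R y * ι R z = ιMulti R 3 ![x, y, z] := by
  simp [ιMulti_apply, mul_assoc]

theorem linearIndependent_ιMulti_family {I : Type*} [LinearOrder I] (b : Basis I R M) (n : ℕ) :
    LinearIndependent R (ιMulti_family R n b) :=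
  (exteriorPower.ιMulti_family_linearIndependent_ofBasis R n b).map' _ (ker_subtype _)

theorem ιMulti_comp_mem_span_ιMulti_family {I : Type*} [LinearOrder I] (b : Basis I R M)
    {n : ℕ} (α : Fin n → I) :
    ιMulti R n (b ∘ α) ∈ span R (ιMulti_family R n b '' {s | (s : Set I) ⊆ Set.range α}) := by
  have : exteriorPower.ιMulti R n (b ∘ α) ∈
      span R (b.exteriorPower n '' {s | (s : Set I) ⊆ Set.range α}) := by
    rw [Basis.mem_span_image]
    intro s hs
    by_contra hsα
    obtain ⟨i, his, hiα⟩ := Set.not_subset.mp hsα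
    obtain ⟨k, rfl⟩ := (Set.powersetCard.mem_range_ofFinEmbEquiv_symm_iff_mem s i).mpr his
    refine Finsupp.mem_support_iff.mp hs ?_
    -- the `s`-coordinate is a determinant whose column for the index `i ∉ range α` is zero
    rw [exteriorPower.basis_repr_apply, exteriorPower.ιMultiDual_apply_ιMulti]
    refine Matrix.det_eq_zero_of_column_eq_zero k fun j => ?_
    simp only [Matrix.of_apply, Function.comp_apply, Basis.coord_apply, Basis.repr_self]
    exact Finsupp.single_eq_of_ne fun h => hiα ⟨j, h.symm⟩
  simpa [Set.image_image] using apply_mem_span_image_of_mem_span (⋀[R]^n M).subtype this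

end ExteriorAlgebra

namespace Finset

variable {I : Type*} [DecidableEq I]

theorem two_le_card_inter_of_subset_triple {J s : Finset I} {a a' j : I} (ha : a ∈ J)
    (ha' : a' ∈ J) (hs3 : #s = 3) (hs : s ⊆ {a, a', j}) : 2 ≤ #(s ∩ J) := by
  have hs_eq : s = {a, a', j} := eq_of_subset_of_card_le hs (hs3 ▸ card_le_three)
  have hne : a ≠ a' := by
    rintro rfl
    have : #({a, a, j} : Finset I) ≤ 2 := by simpa using card_le_two
    rw [hs_eq] at hs3
    omega
  calc 2 = #{a, a'} := (card_pair hne).symm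
    _ ≤ #(s ∩ J) := card_le_card (by simp [insert_subset_iff, hs_eq, ha, ha'])

theorem not_disjoint_of_card_lt_card_inter_add_card_inter {J s t : Finset I}
    (h : #J < #(s ∩ J) + #(t ∩ J)) : ¬Disjoint s t := by
  obtain ⟨x, hx⟩ := inter_nonempty_of_card_lt_card_add_card inter_subset_right inter_subset_right h
  simp only [mem_inter] at hx
  exact not_disjoint_iff.mpr ⟨x, hx.1.1, hx.2.1⟩

end Finset

section ExteriorSquareWedge

variable {R M : Type*} [CommRing R] [AddCommGroup M] [Module R M]

/-- The paper's `T_U = ⋀²U ∧ M`. -/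
def exteriorSquareWedge (U : Submodule R M) : Submodule R (ExteriorAlgebra R M) :=
  span R {x | ∃ u₁ ∈ U, ∃ u₂ ∈ U, ∃ w : M, x = ι R u₁ * ι R u₂ * ι R w}

theorem exteriorSquareWedge_le_exteriorPower (U : Submodule R M) :
    exteriorSquareWedge U ≤ ⋀[R]^3 M := by
  refine span_le.mpr ?_
  rintro _ ⟨u₁, -, u₂, -, w, rfl⟩
  rw [ι_mul_ι_mul_ι_eq_ιMulti]
  exact ιMulti_range R 3 ⟨_, rfl⟩

theorem ιMulti_mem_exteriorSquareWedge {U : Submodule R M} {v : Fin 3 → M} {i j : Fin 3}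
    (hij : i ≠ j) (hi : v i ∈ U) (hj : v j ∈ U) : ιMulti R 3 v ∈ exteriorSquareWedge U := by
  have perm_exists : ∀ i j : Fin 3, i ≠ j → ∃ σ : Equiv.Perm (Fin 3), σ 0 = i ∧ σ 1 = j := by
    decide
  obtain ⟨σ, rfl, rfl⟩ := perm_exists i j hij
  have : ιMulti R 3 (v ∘ σ) ∈ exteriorSquareWedge U := by
    refine subset_span ⟨_, hi, _, hj, v (σ 2), ?_⟩
    rw [ι_mul_ι_mul_ι_eq_ιMulti]
    congr 1
    ext k
    fin_cases k <;> rfl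
  rwa [AlternatingMap.map_perm, smul_mem_iff'] at this

variable {I : Type*} [LinearOrder I] {U : Submodule R M} {b : Basis I R M} {J : Finset I}

theorem exteriorSquareWedge_eq_span (hU : span R (b '' J) = U) :
    exteriorSquareWedge U =
      span R (Set.range fun s : {s : Set.powersetCard I 3 // 2 ≤ #(s.val ∩ J)} =>
        ιMulti_family R 3 b s) := by
  apply le_antisymm
  · refine span_le.mpr ?_
    rintro _ ⟨u₁, hu₁, u₂, hu₂, w, rfl⟩
    have hιU : ∀ u ∈ U, ι R u ∈ span R (ι R '' (b '' J)) := fun u hu =>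
      apply_mem_span_image_of_mem_span (ι R) (hU ▸ hu)
    have hιW : ι R w ∈ span R (ι R '' Set.range b) :=
      apply_mem_span_image_of_mem_span (ι R) (b.mem_span w)
    have hmem := mul_mem_mul (mul_mem_mul (hιU u₁ hu₁) (hιU u₂ hu₂)) hιW
    rw [span_mul_span, span_mul_span] at hmem
    refine span_le.mpr ?_ hmem
    rintro _ ⟨_, ⟨_, ⟨_, ⟨a, ha, rfl⟩, rfl⟩, _, ⟨_, ⟨a', ha', rfl⟩, rfl⟩, rfl⟩, _,
      ⟨_, ⟨j, rfl⟩, rfl⟩, rfl⟩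
    have hb : ![b a, b a', b j] = b ∘ ![a, a', j] := by
      ext k
      fin_cases k <;> rfl
    show ι R (b a) * ι R (b a') * ι R (b j) ∈ _
    rw [ι_mul_ι_mul_ι_eq_ιMulti, hb]
    refine span_mono ?_ (ιMulti_comp_mem_span_ιMulti_family b ![a, a', j])
    rintro _ ⟨s, hs, rfl⟩
    have hsub : (s : Finset I) ⊆ {a, a', j} := fun x hx => by
      obtain ⟨k, hk⟩ := hs hx
      fin_cases k <;> simp [← hk]
    exact ⟨⟨s, two_le_card_inter_of_subset_triple ha ha' s.2 hsub⟩, rfl⟩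
  · refine span_le.mpr ?_
    rintro _ ⟨⟨s, hs⟩, rfl⟩
    obtain ⟨x, hx, y, hy, hxy⟩ := one_lt_card.mp hs
    rw [mem_inter] at hx hy
    obtain ⟨i, rfl⟩ := (Set.powersetCard.mem_range_ofFinEmbEquiv_symm_iff_mem s x).mpr hx.1
    obtain ⟨i', rfl⟩ := (Set.powersetCard.mem_range_ofFinEmbEquiv_symm_iff_mem s y).mpr hy.1
    exact ιMulti_mem_exteriorSquareWedge (ne_of_apply_ne _ hxy)
      (hU ▸ subset_span ⟨_, hx.2, rfl⟩) (hU ▸ subset_span ⟨_, hy.2, rfl⟩)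

theorem finrank_exteriorSquareWedge [Nontrivial R] [StrongRankCondition R] [Fintype I]
    (hU : span R (b '' J) = U) :
    finrank R (exteriorSquareWedge U) =
      Nat.card {s : Set.powersetCard I 3 // 2 ≤ #(s.val ∩ J)} := by
  rw [exteriorSquareWedge_eq_span hU, Nat.card_eq_fintype_card]
  exact finrank_span_eq_card ((linearIndependent_ιMulti_family b 3).comp _ Subtype.val_injective)

theorem mul_eq_zero_of_mem_exteriorSquareWedge (hU : span R (b '' J) = U) (hJ : #J ≤ 3)
    {α β : ExteriorAlgebra R M} (hα : α ∈ exteriorSquareWedge U)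
    (hβ : β ∈ exteriorSquareWedge U) : α * β = 0 := by
  rw [exteriorSquareWedge_eq_span hU] at hα hβ
  have hmem := mul_mem_mul hα hβ
  rw [span_mul_span] at hmem
  refine (mem_bot R).mp (span_le.mpr ?_ hmem)
  rintro _ ⟨_, ⟨⟨s, hs⟩, rfl⟩, _, ⟨⟨t, ht⟩, rfl⟩, rfl⟩
  exact ιMulti_family_mul_of_not_disjoint R b s t
    (not_disjoint_of_card_lt_card_inter_add_card_inter (J := J) (by omega))

end ExteriorSquareWedge

theorem Submodule.exists_basis_span_image_castAdd_eq {K W : Type*} [Field K] [AddCommGroup W]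
    [Module K W] [FiniteDimensional K W] (U : Submodule K W) {m k : ℕ} (hU : finrank K U = m)
    (hW : finrank K W = m + k) :
    ∃ b : Basis (Fin (m + k)) K W,
      span K (b '' ↑(univ.map (Fin.castAddEmb k) : Finset (Fin (m + k)))) = U := by
  obtain ⟨C, hC⟩ := U.exists_isCompl
  have hCk : finrank K C = k := by
    have := finrank_add_eq_of_isCompl hC
    omega
  let bU := finBasisOfFinrankEq K U hU
  let b := ((bU.prod (finBasisOfFinrankEq K C hCk)).map (U.prodEquivOfIsCompl C hC)).reindex
    finSumFinEquiv
  have hb : b ∘ Fin.castAdd k = U.subtype ∘ bU := by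
    ext i
    simp [b]
  refine ⟨b, ?_⟩
  rw [coe_map, coe_univ, Set.image_univ, Fin.coe_castAddEmb, ← Set.range_comp, hb,
    Set.range_comp, ← map_span, bU.span_eq, map_subtype_top]

theorem card_powersetCard_three_two_le_card_inter_castAdd :
    Nat.card {s : Set.powersetCard (Fin (3 + 3)) 3 // 2 ≤ #(s.val ∩ univ.map (Fin.castAddEmb 3))}
      = 10 := by
  refine (Nat.card_congr (Equiv.subtypeSubtypeEquivSubtypeInter (fun s => #s = 3)
    fun s => 2 ≤ #(s ∩ univ.map (Fin.castAddEmb 3)))).trans ?_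
  rw [Nat.card_eq_fintype_card]
  decide

/-- For a 6-dimensional complex vector space `W` with volume form and a
3-dimensional subspace `U ⊆ W`, the subspace `T_U = ⋀²U ∧ W ⊆ ⋀³W` is 10-dimensional and
Lagrangian for `ω (α, β) = vol (α ∧ β)`. -/
theorem T_U_lagrangian
    (W : Type) [AddCommGroup W] [Module ℂ W] [FiniteDimensional ℂ W]
    (hdim : finrank ℂ W = 6)
    (vol : (⋀[ℂ]^6 W) ≃ₗ[ℂ] ℂ)
    (U : Submodule ℂ W) (hU : finrank ℂ U = 3)
    (T_U : Submodule ℂ (ExteriorAlgebra ℂ W))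
    (hT : T_U = Submodule.span ℂ
      {x | ∃ u₁ ∈ U, ∃ u₂ ∈ U, ∃ w : W,
        x = ExteriorAlgebra.ι ℂ u₁ * ExteriorAlgebra.ι ℂ u₂ * ExteriorAlgebra.ι ℂ w}) :
    finrank ℂ T_U = 10 ∧
    ∃ h3 : T_U ≤ ⋀[ℂ]^3 W,
      ∀ α β : ExteriorAlgebra ℂ W, ∀ hα : α ∈ T_U, ∀ hβ : β ∈ T_U,
        vol ⟨α * β, SetLike.mul_mem_graded (h3 hα) (h3 hβ)⟩ = 0 := by
  obtain ⟨b, hb⟩ := U.exists_basis_span_image_castAdd_eq hU (k := 3) hdim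
  replace hT : T_U = exteriorSquareWedge U := hT
  refine ⟨?_, hT ▸ exteriorSquareWedge_le_exteriorPower U, fun α β hα hβ => ?_⟩
  · rw [hT, finrank_exteriorSquareWedge hb, card_powersetCard_three_two_le_card_inter_castAdd]
  · rw [hT] at hα hβ
    have hαβ : α * β = 0 := mul_eq_zero_of_mem_exteriorSquareWedge hb (by simp) hα hβ
    simp_rw [hαβ]
    exact vol.map_zero
end

section
/- Let W be a 6-dimensional complex vector space. Then Ω := ℙ(W ∧ ∧²W) = {[v ∧ α] : v ∈ W, α ∈ ∧²W, v ∧ α ≠ 0} ⊂ ℙ(∧³W) satisfies: for every [β] ∈ Ω that is not totally decomposable (i.e. [β] ∉ G(3,W)), there is exactly one [v] ∈ ℙ(W) with β ∈ v ∧ ∧²W. -/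
/-!
If `v` and `v'` are not proportional, pick functionals `f` with `f v = 1` and `g` with
`g v' = 1`, `g v = 0`. Since `v ∧ β = 0`, contraction gives `β = v ∧ (f ⌋ β)`, and likewise
`β = v' ∧ (g ⌋ β)`; contracting the first identity by `g` yields `g ⌋ β = -v ∧ (g ⌋ f ⌋ β)`, so
`β = v' ∧ v ∧ (-g ⌋ f ⌋ β)` with `g ⌋ f ⌋ β` a vector: `β` is totally decomposable.
-/

open ExteriorAlgebra Module

open CliffordAlgebra in
local notation d "⌋" x => contractLeft d x

theorem Submodule.exists_dual_apply_eq_one_of_notMem {K M : Type*} [Field K] [AddCommGroup M]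
    [Module K M] {p : Submodule K M} {u : M} (hu : u ∉ p) :
    ∃ f : Dual K M, f u = 1 ∧ ∀ x ∈ p, f x = 0 := by
  obtain ⟨f, hfu, hfp⟩ := p.exists_dual_map_eq_bot_of_notMem hu inferInstance
  refine ⟨(f u)⁻¹ • f, by simp [hfu], fun x hx => ?_⟩
  have : f x ∈ (⊥ : Submodule K K) := hfp ▸ Submodule.mem_map_of_mem hx
  simp_all

namespace ExteriorAlgebra

section CommRing

variable {R M : Type*} [CommRing R] [AddCommGroup M] [Module R M]

theorem contractLeft_mem_exteriorPower_succ (d : Dual R M) {n : ℕ} {x : ExteriorAlgebra R M}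
    (hx : x ∈ ⋀[R]^(n + 1) M) : (d⌋x) ∈ ⋀[R]^n M := by
  induction n generalizing x with
  | zero =>
    rw [exteriorPower, pow_one] at hx
    obtain ⟨u, rfl⟩ := hx
    simp [CliffordAlgebra.contractLeft_ι]
  | succ n ih =>
    rw [exteriorPower, pow_succ'] at hx
    refine Submodule.mul_induction_on hx (fun a ha y hy => ?_) (fun y z hy hz => ?_)
    · obtain ⟨u, rfl⟩ := ha
      rw [CliffordAlgebra.contractLeft_ι_mul]
      refine sub_mem (Submodule.smul_mem _ _ hy) ?_
      rw [exteriorPower, pow_succ']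
      exact Submodule.mul_mem_mul (LinearMap.mem_range_self _ u) (ih hy)
    · rw [map_add]
      exact add_mem hy hz

theorem ι_mul_ι_mul_eq_zero (u : M) (x : ExteriorAlgebra R M) : ι R u * (ι R u * x) = 0 := by
  rw [← mul_assoc, ι_sq_zero, zero_mul]

theorem eq_ι_mul_contractLeft_of_ι_mul_eq_zero {u : M} {x : ExteriorAlgebra R M}
    (hx : ι R u * x = 0) {d : Dual R M} (hd : d u = 1) : x = ι R u * (d⌋x) := by
  have := CliffordAlgebra.contractLeft_ι_mul d u x
  rw [hx, map_zero, hd, one_smul] at this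
  exact sub_eq_zero.mp this.symm

end CommRing

variable {K M : Type*} [Field K] [AddCommGroup M] [Module K M]

theorem exists_eq_ι_mul_ι_mul_of_ι_mul_eq_zero {u v : M} (hv : v ≠ 0) (hu : u ∉ K ∙ v)
    {n : ℕ} {x : ExteriorAlgebra K M} (hx : x ∈ ⋀[K]^(n + 2) M)
    (hux : ι K u * x = 0) (hvx : ι K v * x = 0) :
    ∃ y ∈ ⋀[K]^n M, x = ι K u * ι K v * y := by
  obtain ⟨f, hfv, -⟩ := Submodule.exists_dual_apply_eq_one_of_notMem (p := (⊥ : Submodule K M)) (u := v)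
    (by simpa using hv)
  obtain ⟨g, hgu, hgv⟩ := Submodule.exists_dual_apply_eq_one_of_notMem hu
  refine ⟨-(g⌋(f⌋x)), neg_mem (contractLeft_mem_exteriorPower_succ g
    (contractLeft_mem_exteriorPower_succ f hx)), ?_⟩
  have hxv : x = ι K v * (f⌋x) := eq_ι_mul_contractLeft_of_ι_mul_eq_zero hvx hfv
  calc x = ι K u * (g⌋x) := eq_ι_mul_contractLeft_of_ι_mul_eq_zero hux hgu
    _ = ι K u * (g⌋(ι K v * (f⌋x))) := congrArg (fun x => ι K u * (g⌋x)) hxv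
    _ = ι K u * ι K v * -(g⌋(f⌋x)) := by
      rw [CliffordAlgebra.contractLeft_ι_mul, hgv v (Submodule.mem_span_singleton_self v),
        zero_smul, zero_sub, mul_neg, mul_neg, mul_assoc]

end ExteriorAlgebra

theorem omega_vector_part_unique_general
    (W : Type) [AddCommGroup W] [Module ℂ W]
    (β : ExteriorAlgebra ℂ W) (hβ3 : β ∈ ⋀[ℂ]^3 W) (hβ0 : β ≠ 0)
    (hG : ¬ ∃ w₁ w₂ w₃ : W,
      β = ExteriorAlgebra.ι ℂ w₁ * ExteriorAlgebra.ι ℂ w₂ * ExteriorAlgebra.ι ℂ w₃)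
    (v v' : W) (α α' : ExteriorAlgebra ℂ W)
    (h : β = ExteriorAlgebra.ι ℂ v * α)
    (h' : β = ExteriorAlgebra.ι ℂ v' * α') :
    ∃ c : ℂ, c ≠ 0 ∧ v' = c • v := by
  by_cases hv' : v' ∈ ℂ ∙ v
  · obtain ⟨c, rfl⟩ := Submodule.mem_span_singleton.mp hv'
    refine ⟨c, fun hc => hβ0 ?_, rfl⟩
    simp [h', hc]
  · have hv : v ≠ 0 := by
      rintro rfl
      exact hβ0 (by simp [h])
    obtain ⟨y, hy, hβ⟩ := exists_eq_ι_mul_ι_mul_of_ι_mul_eq_zero hv hv' hβ3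
      (h' ▸ ι_mul_ι_mul_eq_zero v' α') (h ▸ ι_mul_ι_mul_eq_zero v α)
    rw [exteriorPower, pow_one] at hy
    obtain ⟨w, rfl⟩ := hy
    exact (hG ⟨v', v, w, hβ⟩).elim

/-- For a 6-dimensional complex vector space `W`, every class
`[β] ∈ Ω ∖ G(3,W)` (a nonzero 3-vector of the form `v ∧ α`, `α ∈ ⋀²W`, which is not totally
decomposable) has a unique 'vector part' `[v] ∈ ℙ(W)`: if `β = v ∧ α = v' ∧ α'` then `v'` is
proportional to `v`. -/
theorem omega_vector_part_unique
    (W : Type) [AddCommGroup W] [Module ℂ W] [FiniteDimensional ℂ W]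
    (hdim : finrank ℂ W = 6)
    (β : ExteriorAlgebra ℂ W) (hβ3 : β ∈ ⋀[ℂ]^3 W) (hβ0 : β ≠ 0)
    (hG : ¬ ∃ w₁ w₂ w₃ : W,
      β = ExteriorAlgebra.ι ℂ w₁ * ExteriorAlgebra.ι ℂ w₂ * ExteriorAlgebra.ι ℂ w₃)
    (v v' : W) (α α' : ExteriorAlgebra ℂ W)
    (hα : α ∈ ⋀[ℂ]^2 W) (hα' : α' ∈ ⋀[ℂ]^2 W)
    (h : β = ExteriorAlgebra.ι ℂ v * α)
    (h' : β = ExteriorAlgebra.ι ℂ v' * α') :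
    ∃ c : ℂ, c ≠ 0 ∧ v' = c • v :=
  omega_vector_part_unique_general W β hβ3 hβ0 hG v v' α α' h h'
end

section
/- Let W be a 6-dimensional complex vector space, U ⊂ W a 3-dimensional subspace with basis u₁, u₂, u₃. A general element of T_U = ∧²U ∧ W can be written as u₁∧u₂∧w₁ + u₂∧u₃∧w₂ + u₁∧u₃∧w₃ with w₁, w₂, w₃ ∈ W. If w₁, w₂, w₃ together with u₁, u₂, u₃ form a basis of W, then this 3-form does not lie in Ω, i.e., it is not of the form v ∧ α for any v ∈ W, α ∈ ∧²W. -/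
open ExteriorAlgebra Module

section Aux

variable {W : Type} [AddCommGroup W] [Module ℂ W]

/-- Alternating map extracting the coefficient matrix determinant along indices `s`. -/
noncomputable def extAlt (b : Basis (Fin 6) ℂ W) (n : ℕ) (s : Fin n → Fin 6) :
    W [⋀^Fin n]→ₗ[ℂ] ℂ :=
  (Matrix.detRowAlternating).compLinearMap (LinearMap.pi fun r => b.coord (s r))

noncomputable def phi4 (b : Basis (Fin 6) ℂ W) (s : Fin 4 → Fin 6) :
    ExteriorAlgebra ℂ W →ₗ[ℂ] ℂ :=
  liftAlternating (fun i => match i with | 4 => extAlt b 4 s | _ => 0)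

noncomputable def phi3 (b : Basis (Fin 6) ℂ W) (s : Fin 3 → Fin 6) :
    ExteriorAlgebra ℂ W →ₗ[ℂ] ℂ :=
  liftAlternating (fun i => match i with | 3 => extAlt b 3 s | _ => 0)

lemma ιMulti_four (a x y z : W) :
    ιMulti ℂ 4 ![a, x, y, z] = ι ℂ a * ι ℂ x * ι ℂ y * ι ℂ z := by
  simp [ιMulti_apply, List.ofFn_succ, mul_assoc]

lemma ιMulti_three (x y z : W) :
    ιMulti ℂ 3 ![x, y, z] = ι ℂ x * ι ℂ y * ι ℂ z := by
  simp [ιMulti_apply, List.ofFn_succ, mul_assoc]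

lemma phi4_eval (b : Basis (Fin 6) ℂ W) (s : Fin 4 → Fin 6) (a x y z : W) :
    phi4 b s (ι ℂ a * ι ℂ x * ι ℂ y * ι ℂ z) =
      Matrix.det (Matrix.of fun i j => b.coord (s j) (![a, x, y, z] i)) := by
  rw [← ιMulti_four, phi4, liftAlternating_apply_ιMulti]
  rfl

lemma phi3_eval (b : Basis (Fin 6) ℂ W) (s : Fin 3 → Fin 6) (x y z : W) :
    phi3 b s (ι ℂ x * ι ℂ y * ι ℂ z) =
      Matrix.det (Matrix.of fun i j => b.coord (s j) (![x, y, z] i)) := by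
  rw [← ιMulti_three, phi3, liftAlternating_apply_ιMulti]
  rfl

lemma det_fin_four' (A : Matrix (Fin 4) (Fin 4) ℂ) :
    A.det = A 0 0 * A 1 1 * A 2 2 * A 3 3 - A 0 0 * A 1 1 * A 2 3 * A 3 2 - A 0 0 * A 1 2 * A 2 1 * A 3 3 + A 0 0 * A 1 2 * A 2 3 * A 3 1 + A 0 0 * A 1 3 * A 2 1 * A 3 2 - A 0 0 * A 1 3 * A 2 2 * A 3 1 - A 0 1 * A 1 0 * A 2 2 * A 3 3 + A 0 1 * A 1 0 * A 2 3 * A 3 2 + A 0 1 * A 1 2 * A 2 0 * A 3 3 - A 0 1 * A 1 2 * A 2 3 * A 3 0 - A 0 1 * A 1 3 * A 2 0 * A 3 2 + A 0 1 * A 1 3 * A 2 2 * A 3 0 + A 0 2 * A 1 0 * A 2 1 * A 3 3 - A 0 2 * A 1 0 * A 2 3 * A 3 1 - A 0 2 * A 1 1 * A 2 0 * A 3 3 + A 0 2 * A 1 1 * A 2 3 * A 3 0 + A 0 2 * A 1 3 * A 2 0 * A 3 1 - A 0 2 * A 1 3 * A 2 1 * A 3 0 - A 0 3 * A 1 0 *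 A 2 1 * A 3 2 + A 0 3 * A 1 0 * A 2 2 * A 3 1 + A 0 3 * A 1 1 * A 2 0 * A 3 2 - A 0 3 * A 1 1 * A 2 2 * A 3 0 - A 0 3 * A 1 2 * A 2 0 * A 3 1 + A 0 3 * A 1 2 * A 2 1 * A 3 0 := by
  rw [Matrix.det_succ_row_zero]
  simp only [Fin.sum_univ_succ, Fin.sum_univ_zero, Matrix.det_fin_three, Matrix.submatrix_apply]
  norm_num [Fin.succAbove, Fin.lt_def]
  simp only [show ((2 : Fin 3).succ : Fin 4) = 3 from rfl,
    show ((2 : Fin 3).castSucc : Fin 4) = 2 from rfl]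
  ring

end Aux

set_option maxHeartbeats 1600000 in
/-- Let `u₁,u₂,u₃` be a basis of a 3-dimensional subspace `U ⊆ W` and
`w₁,w₂,w₃ ∈ W` such that `u₁,u₂,u₃,w₁,w₂,w₃` is a basis of the 6-dimensional space `W`.  Then
the 3-form `u₁∧u₂∧w₁ + u₂∧u₃∧w₂ + u₁∧u₃∧w₃ ∈ T_U` is not of the form `v ∧ α` with `α ∈ ⋀²W`,
i.e. it does not lie in `Ω`. -/
theorem general_element_of_T_U_not_in_omega
    (W : Type) [AddCommGroup W] [Module ℂ W] [FiniteDimensional ℂ W]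
    (hdim : finrank ℂ W = 6)
    (u₁ u₂ u₃ w₁ w₂ w₃ : W)
    (hbasis : LinearIndependent ℂ ![u₁, u₂, u₃, w₁, w₂, w₃]) :
    ∀ (v : W) (α : ExteriorAlgebra ℂ W), α ∈ ⋀[ℂ]^2 W →
      ExteriorAlgebra.ι ℂ v * α ≠
        ExteriorAlgebra.ι ℂ u₁ * ExteriorAlgebra.ι ℂ u₂ * ExteriorAlgebra.ι ℂ w₁ +
        ExteriorAlgebra.ι ℂ u₂ * ExteriorAlgebra.ι ℂ u₃ * ExteriorAlgebra.ι ℂ w₂ +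
        ExteriorAlgebra.ι ℂ u₁ * ExteriorAlgebra.ι ℂ u₃ * ExteriorAlgebra.ι ℂ w₃ := by
  intro v α _ h
  set b : Basis (Fin 6) ℂ W :=
    basisOfLinearIndependentOfCardEqFinrank hbasis (by simp [hdim]) with hb
  have hcoe : ⇑b = ![u₁, u₂, u₃, w₁, w₂, w₃] :=
    coe_basisOfLinearIndependentOfCardEqFinrank _ _
  have e0 : u₁ = b 0 := by rw [hcoe]; rfl
  have e1 : u₂ = b 1 := by rw [hcoe]; rfl
  have e2 : u₃ = b 2 := by rw [hcoe]; rfl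
  have e3 : w₁ = b 3 := by rw [hcoe]; rfl
  have e4 : w₂ = b 4 := by rw [hcoe]; rfl
  have e5 : w₃ = b 5 := by rw [hcoe]; rfl
  rw [e0, e1, e2, e3, e4, e5] at h
  have hvβ : ι ℂ v * (ι ℂ (b 0) * ι ℂ (b 1) * ι ℂ (b 3) +
      ι ℂ (b 1) * ι ℂ (b 2) * ι ℂ (b 4) +
      ι ℂ (b 0) * ι ℂ (b 2) * ι ℂ (b 5)) = 0 := by
    rw [← h, ← mul_assoc, ι_sq_zero, zero_mul]
  simp only [mul_add, ← mul_assoc] at hvβ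
  have key : ∀ s : Fin 4 → Fin 6,
      Matrix.det (Matrix.of fun i j => b.coord (s j) (![v, b 0, b 1, b 3] i)) +
      Matrix.det (Matrix.of fun i j => b.coord (s j) (![v, b 1, b 2, b 4] i)) +
      Matrix.det (Matrix.of fun i j => b.coord (s j) (![v, b 0, b 2, b 5] i)) = 0 := by
    intro s
    have := congrArg (phi4 b s) hvβ
    simpa only [map_add, map_zero, phi4_eval] using this
  have hv : v = 0 := by
    rw [← b.forall_coord_eq_zero_iff]
    have h0 := key ![0, 1, 2, 4]
    have h1 := key ![0, 1, 2, 5]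
    have h2 := key ![0, 1, 2, 3]
    have h3 := key ![1, 2, 3, 4]
    have h4 := key ![0, 1, 3, 4]
    have h5 := key ![0, 1, 3, 5]
    simp (config := { decide := true }) [det_fin_four', Matrix.of_apply, Basis.coord_apply,
      Basis.repr_self, Finsupp.single_apply] at h0 h1 h2 h3 h4 h5
    intro i
    fin_cases i <;> simp [Basis.coord_apply] <;>
      first
      | linear_combination h0
      | linear_combination h1
      | linear_combination h2
      | linear_combination h3
      | linear_combination h4
      | linear_combination h5
  rw [hv, map_zero, zero_mul] at h
  have h3 := congrArg (phi3 b ![0, 1, 3]) h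
  simp only [map_zero, map_add, phi3_eval] at h3
  simp (config := { decide := true }) [Matrix.det_fin_three, Matrix.of_apply, Basis.coord_apply,
    Basis.repr_self, Finsupp.single_apply] at h3
end
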